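/- For a constant matrix A with ‖A‖ small, the fourth-order Cayley–Magnus argument reproduces the exponential: Cay(-(δt A - (1/12)(δt A)³)) = exp(δt A) + O(δt⁵); equivalently, ‖Cay(-(δt A - (δt³/12)A³)) - exp(δt A)‖ ≤ C δt⁵ for δt small. -/

import Mathlib

/-!
Write `Ω = X - X³/12` and `B = Ω/2`, so that `Cay(-Ω) = (1 - B)⁻¹(1 + B)` and
`Cay(-Ω) - exp X = (1 - B)⁻¹ ((1 + B) - (1 - B) exp X)`. Replacing `exp X` by its Taylor
polynomial of degree 4 turns the bracket into exactly `-(X⁶/144 + X⁷/576)`, and the Taylor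
remainder is `O(‖X‖⁵)`, while `(1 - B)⁻¹` stays bounded near `0`. This works in any Banach
algebra; for matrices one runs it with the submultiplicative `L∞` operator norm, which dominates
the entrywise sup norm.
-/

open Matrix

attribute [local instance] Matrix.normedAddCommGroup Matrix.normedSpace

/-- The Cayley transform of a matrix. -/
noncomputable def Cay {d : ℕ} (A : Matrix (Fin d) (Fin d) ℂ) : Matrix (Fin d) (Fin d) ℂ :=
  (1 + (1/2 : ℂ) • A)⁻¹ * (1 - (1/2 : ℂ) • A)

open Filter Asymptotics NormedSpace
open scoped Topology Nat

section Algebraic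

variable {𝕂 𝔸 : Type*} [Field 𝕂] [Ring 𝔸] [Algebra 𝕂 𝔸]

variable (𝕂)

noncomputable def cayley (M : 𝔸) : 𝔸 :=
  Ring.inverse (1 + (1/2 : 𝕂) • M) * (1 - (1/2 : 𝕂) • M)

def magnusOmega4 (X : 𝔸) : 𝔸 :=
  X - (1/12 : 𝕂) • X ^ 3

variable {𝕂}

theorem one_add_half_magnusOmega4_sub_mul_sum_range_five [CharZero 𝕂] (X : 𝔸) :
    (1 + (1/2 : 𝕂) • magnusOmega4 𝕂 X)
        - (1 - (1/2 : 𝕂) • magnusOmega4 𝕂 X) * ∑ k ∈ Finset.range 5, (k !⁻¹ : 𝕂) • X ^ k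
      = -((1/144 : 𝕂) • X ^ 6 + (1/576 : 𝕂) • X ^ 7) := by
  simp only [magnusOmega4, Finset.sum_range_succ, Finset.sum_range_zero, Nat.factorial, mul_add,
    sub_mul, smul_mul_assoc, mul_smul_comm, one_mul, mul_one, ← pow_add, ← pow_succ']
  norm_num
  module

theorem cayley_neg_sub_eq_inverse_mul {M : 𝔸} (hM : IsUnit (1 - (1/2 : 𝕂) • M)) (E : 𝔸) :
    cayley 𝕂 (-M) - E
      = Ring.inverse (1 - (1/2 : 𝕂) • M) * ((1 + (1/2 : 𝕂) • M) - (1 - (1/2 : 𝕂) • M) * E) := by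
  rw [mul_sub, ← mul_assoc, Ring.inverse_mul_cancel _ hM, one_mul, cayley, smul_neg,
    sub_neg_eq_add, ← sub_eq_add_neg]

end Algebraic

section NormedAlgebra

variable {𝕂 𝔸 : Type*} [RCLike 𝕂] [NormedRing 𝔸] [NormedAlgebra 𝕂 𝔸]

theorem isBigO_pow_norm_pow_of_le {m n : ℕ} (hmn : m ≤ n) (hn : 0 < n) :
    (fun x : 𝔸 => x ^ n) =O[𝓝 0] fun x => ‖x‖ ^ m := by
  refine IsBigO.of_bound 1 ?_
  filter_upwards [Metric.closedBall_mem_nhds (0 : 𝔸) one_pos] with x hx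
  rw [mem_closedBall_zero_iff] at hx
  calc ‖x ^ n‖ ≤ ‖x‖ ^ n := norm_pow_le' x hn
    _ ≤ ‖x‖ ^ m := pow_le_pow_of_le_one (norm_nonneg x) hx hmn
    _ = 1 * ‖‖x‖ ^ m‖ := by simp

variable [CompleteSpace 𝔸]

variable (𝕂) in
theorem isBigO_exp_sub_sum_range (n : ℕ) :
    (fun x : 𝔸 => exp x - ∑ k ∈ Finset.range n, (k !⁻¹ : 𝕂) • x ^ k) =O[𝓝 0]
      fun x => ‖x‖ ^ n := by
  simpa [FormalMultilinearSeries.partialSum, expSeries_apply_eq] using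
    (hasFPowerSeriesAt_exp_zero_of_radius_pos
      (expSeries_radius_pos 𝕂 𝔸)).isBigO_sub_partialSum_pow n

theorem isBigO_cayley_neg_magnusOmega4_sub_exp :
    (fun X : 𝔸 => cayley 𝕂 (-magnusOmega4 𝕂 X) - exp X) =O[𝓝 0] fun X => ‖X‖ ^ 5 := by
  have hB : Tendsto (fun X : 𝔸 => 1 - (1/2 : 𝕂) • magnusOmega4 𝕂 X) (𝓝 0) (𝓝 1) := by
    have : Continuous fun X : 𝔸 => 1 - (1/2 : 𝕂) • (X - (1/12 : 𝕂) • X ^ 3) := by fun_prop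
    simpa [magnusOmega4] using this.tendsto 0
  have hunit : ∀ᶠ X : 𝔸 in 𝓝 0, IsUnit (1 - (1/2 : 𝕂) • magnusOmega4 𝕂 X) :=
    hB.eventually (Units.isOpen.mem_nhds isUnit_one)
  have hinv : (fun X : 𝔸 => Ring.inverse (1 - (1/2 : 𝕂) • magnusOmega4 𝕂 X))
      =O[𝓝 0] fun _ => (1 : ℝ) :=
    ((NormedRing.inverse_continuousAt (1 : 𝔸ˣ)).tendsto.comp hB).isBigO_one ℝ
  have hrem : (fun X : 𝔸 => -((1/144 : 𝕂) • X ^ 6 + (1/576 : 𝕂) • X ^ 7)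
      - (1 - (1/2 : 𝕂) • magnusOmega4 𝕂 X)
        * (exp X - ∑ k ∈ Finset.range 5, (k !⁻¹ : 𝕂) • X ^ k)) =O[𝓝 0] fun X => ‖X‖ ^ 5 := by
    refine IsBigO.sub (IsBigO.neg_left (IsBigO.add ?_ ?_)) ?_
    · exact (isBigO_pow_norm_pow_of_le (m := 5) (n := 6) (by norm_num) (by norm_num)).const_smul_left
        (1/144 : 𝕂)
    · exact (isBigO_pow_norm_pow_of_le (m := 5) (n := 7) (by norm_num) (by norm_num)).const_smul_left
        (1/576 : 𝕂)
    · simpa using (hB.isBigO_one ℝ).mul (isBigO_exp_sub_sum_range 𝕂 5)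
  refine (hinv.mul hrem).congr' ?_ (by simp)
  filter_upwards [hunit] with X hX
  rw [cayley_neg_sub_eq_inverse_mul hX, ← one_add_half_magnusOmega4_sub_mul_sum_range_five]
  noncomm_ring

theorem isBigO_cayley_magnus_smul_sub_exp (A : 𝔸) :
    (fun t : 𝕂 => cayley 𝕂 (-(t • A - (t ^ 3 / 12) • (A * A * A))) - exp (t • A))
      =O[𝓝 0] fun t => ‖t‖ ^ 5 := by
  have hA : Tendsto (fun t : 𝕂 => t • A) (𝓝 0) (𝓝 0) := by
    simpa using (tendsto_id (x := 𝓝 (0 : 𝕂))).smul_const A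
  have hΩ (t : 𝕂) : t • A - (t ^ 3 / 12) • (A * A * A) = magnusOmega4 𝕂 (t • A) := by
    rw [magnusOmega4, smul_pow, smul_smul, pow_three A, ← mul_assoc, div_eq_inv_mul, one_div]
  have hnorm : (fun t : 𝕂 => ‖t • A‖ ^ 5) =O[𝓝 0] fun t => ‖t‖ ^ 5 :=
    IsBigO.of_bound (‖A‖ ^ 5) (Eventually.of_forall fun t => by
      simp only [norm_pow, norm_norm, norm_smul, norm_mul, mul_pow]
      rw [mul_comm])
  simpa only [hΩ, Function.comp_def] using
    (isBigO_cayley_neg_magnusOmega4_sub_exp.comp_tendsto hA).trans hnorm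

end NormedAlgebra

theorem exists_pos_bound_of_isBigO_norm_pow {F E : Type*} [SeminormedAddCommGroup F]
    [SeminormedAddCommGroup E] {f : F → E} {n : ℕ} (h : f =O[𝓝 0] fun x => ‖x‖ ^ n) :
    ∃ C > 0, ∃ δ > 0, ∀ x, ‖x‖ ≤ δ → ‖f x‖ ≤ C * ‖x‖ ^ n := by
  obtain ⟨C, hC, hf⟩ := h.exists_pos
  obtain ⟨ε, hε, hball⟩ := Metric.eventually_nhds_iff.1 hf.bound
  refine ⟨C, hC, ε / 2, half_pos hε, fun x hx => ?_⟩
  simpa using hball (show dist x 0 < ε by rw [dist_zero_right]; linarith)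

theorem Matrix.norm_le_sup_sum_nnnorm {m n α : Type*} [Fintype m] [Fintype n]
    [NormedAddCommGroup α] (M : Matrix m n α) :
    ‖M‖ ≤ ((Finset.univ.sup fun i => ∑ j, ‖M i j‖₊ : NNReal) : ℝ) := by
  refine (norm_le_iff (NNReal.coe_nonneg _)).2 fun i j => ?_
  rw [← coe_nnnorm, NNReal.coe_le_coe]
  exact (Finset.single_le_sum (fun _ _ => zero_le) (Finset.mem_univ j)).trans
    (Finset.le_sup (f := fun i => ∑ j, ‖M i j‖₊) (Finset.mem_univ i))

theorem Cay_eq_cayley {d : ℕ} (M : Matrix (Fin d) (Fin d) ℂ) : Cay M = cayley ℂ M := by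
  rw [Cay, cayley, Matrix.nonsing_inv_eq_ringInverse]

/-- For a constant matrix `A`, the fourth-order Cayley–Magnus argument
`Ω = δt A - (1/12)(δt A)³` reproduces the exponential to fifth order:
`‖Cay(-(δt A - (δt³/12) A³)) - exp(δt A)‖ ≤ C δt⁵` for small `δt`. -/
theorem cayley_magnus_fourth_order {d : ℕ} (A : Matrix (Fin d) (Fin d) ℂ) :
    ∃ C > 0, ∃ δ > 0, ∀ δt : ℝ, |δt| ≤ δ →
      ‖Cay (-((δt : ℂ) • A - ((δt : ℂ) ^ 3 / 12) • (A * A * A)))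
          - NormedSpace.exp ((δt : ℂ) • A)‖ ≤ C * |δt| ^ 5 := by
  let _ : NormedAddCommGroup (Matrix (Fin d) (Fin d) ℂ) := Matrix.linftyOpNormedAddCommGroup
  let _ : NormedRing (Matrix (Fin d) (Fin d) ℂ) := Matrix.linftyOpNormedRing
  let _ : NormedAlgebra ℂ (Matrix (Fin d) (Fin d) ℂ) := Matrix.linftyOpNormedAlgebra
  have : CompleteSpace (Matrix (Fin d) (Fin d) ℂ) :=
    FiniteDimensional.complete ℂ (Matrix (Fin d) (Fin d) ℂ)
  have hO := (isBigO_cayley_magnus_smul_sub_exp A).comp_tendsto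
    (Complex.continuous_ofReal.tendsto' 0 0 Complex.ofReal_zero)
  obtain ⟨C, hC, δ, hδ, hbound⟩ := exists_pos_bound_of_isBigO_norm_pow (n := 5)
    (by simpa only [Function.comp_def, Complex.norm_real] using hO)
  refine ⟨C, hC, δ, hδ, fun t ht => ?_⟩
  rw [Cay_eq_cayley]
  have h := hbound t ht
  rw [Matrix.linfty_opNorm_def] at h
  exact (Matrix.norm_le_sup_sum_nnnorm _).trans h
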